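/- (Lemma 3.3 / Theorem 3.4, H* side.) Let k ≥ 3 and m ≥ 3 be integers and n = m(k − 1) − 1. Let (d₁, …, dₙ) be any n-tuple of positive integers with Σᵢ dᵢ = km, and set δᵢ = dᵢ(k − 1). Then Σᵢ δᵢ·log₂ δᵢ ≥ (m + 1)(2k − 2)·log₂(2k − 2) + (n − m − 1)(k − 1)·log₂(k − 1), equivalently the entropy I_δ = log₂(k(k−1)m) − (1/(k(k−1)m))·Σᵢ δᵢ·log₂ δᵢ satisfies I_δ ≤ log₂(k(k−1)m) − (1/(k(k−1)m))·[(m + 1)(2k − 2)·log₂(2k − 2) + (n − m − 1)(k − 1)·log₂(k − 1)], with equality if and only if (d₁, …, dₙ) is a permutation of the tuple consisting of m + 1 entries equal to 2 and n − m − 1 entries equal to 1. -/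

import Mathlib

/-!
Writing `δᵢ = dᵢ c` with `c = k - 1`, the sum `Σ δᵢ log₂ δᵢ` equals
`c Σ dᵢ log₂ dᵢ + c log₂ c · km`, and the bound equals `c · 2(m + 1) + c log₂ c · km`.
Since `Σ (dᵢ - 1) = km - n = m + 1`, everything reduces to the pointwise inequality
`d log₂ d ≥ 2(d - 1)` for positive integers `d`, i.e. `dᵈ ≥ 4ᵈ⁻¹`, which is an equality
exactly for `d ∈ {1, 2}`. A tuple of `1`s and `2`s with the prescribed sum has exactly
`m + 1` entries equal to `2`, hence is a permutation of the extremal one.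
-/

open Finset Real

lemma four_pow_pred_lt_pow_self {d : ℕ} (hd : 3 ≤ d) : 4 ^ (d - 1) < d ^ d := by
  rcases hd.eq_or_lt with rfl | hd
  · norm_num
  · calc 4 ^ (d - 1) < 4 ^ d := Nat.pow_lt_pow_right (by norm_num) (by omega)
      _ ≤ d ^ d := Nat.pow_le_pow_left hd d

lemma two_mul_sub_one_lt_mul_logb_two {d : ℕ} (hd : 3 ≤ d) :
    2 * ((d : ℝ) - 1) < d * logb 2 d := by
  have hpow : (4 : ℝ) ^ (d - 1) < (d : ℝ) ^ d := by exact_mod_cast four_pow_pred_lt_pow_self hd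
  have hlog := logb_lt_logb (b := 2) (by norm_num) (by positivity) hpow
  rw [logb_pow, logb_pow, show (4 : ℝ) = 2 ^ 2 by norm_num, logb_pow,
    logb_self_eq_one (by norm_num), Nat.cast_sub (by omega)] at hlog
  push_cast at hlog
  linarith

lemma mul_logb_two_eq_two_mul_sub_one {d : ℕ} (hd₁ : 1 ≤ d) (hd₂ : d ≤ 2) :
    (d : ℝ) * logb 2 d = 2 * ((d : ℝ) - 1) := by
  interval_cases d <;> norm_num

lemma two_mul_sub_one_le_mul_logb_two {d : ℕ} (hd : 1 ≤ d) :
    2 * ((d : ℝ) - 1) ≤ d * logb 2 d := by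
  rcases le_or_gt d 2 with h | h
  · exact (mul_logb_two_eq_two_mul_sub_one hd h).ge
  · exact (two_mul_sub_one_lt_mul_logb_two h).le

lemma mul_logb_two_eq_two_mul_sub_one_iff {d : ℕ} (hd : 1 ≤ d) :
    (d : ℝ) * logb 2 d = 2 * ((d : ℝ) - 1) ↔ d ≤ 2 :=
  ⟨fun h => not_lt.1 fun h₃ => (two_mul_sub_one_lt_mul_logb_two h₃).ne' h,
    mul_logb_two_eq_two_mul_sub_one hd⟩

section Sums

variable {ι : Type*} [Fintype ι] {d : ι → ℕ}

lemma two_mul_sum_sub_one_le_sum_mul_logb_two (hd : ∀ i, 1 ≤ d i) :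
    2 * ∑ i, ((d i : ℝ) - 1) ≤ ∑ i, (d i : ℝ) * logb 2 (d i) := by
  rw [mul_sum]
  exact sum_le_sum fun i _ => two_mul_sub_one_le_mul_logb_two (hd i)

lemma sum_mul_logb_two_eq_two_mul_sum_sub_one_iff (hd : ∀ i, 1 ≤ d i) :
    ∑ i, (d i : ℝ) * logb 2 (d i) = 2 * ∑ i, ((d i : ℝ) - 1) ↔ ∀ i, d i ≤ 2 := by
  rw [mul_sum, eq_comm, sum_eq_sum_iff_of_le fun i _ => two_mul_sub_one_le_mul_logb_two (hd i)]
  simp only [mem_univ, forall_const]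
  exact forall_congr' fun i => eq_comm.trans (mul_logb_two_eq_two_mul_sub_one_iff (hd i))

end Sums

lemma sum_mul_logb_mul_right {ι : Type*} (s : Finset ι) {x : ι → ℝ} (hx : ∀ i ∈ s, x i ≠ 0)
    {b c : ℝ} (hc : c ≠ 0) :
    ∑ i ∈ s, x i * c * logb b (x i * c) =
      c * ∑ i ∈ s, x i * logb b (x i) + c * logb b c * ∑ i ∈ s, x i := by
  rw [mul_sum, mul_sum, ← sum_add_distrib]
  refine sum_congr rfl fun i hi => ?_
  rw [logb_mul (hx i hi) hc]
  ring

lemma exists_perm_eq_ite_of_le_two {n m : ℕ} {d : Fin n → ℕ} (hd₁ : ∀ i, 1 ≤ d i)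
    (hd₂ : ∀ i, d i ≤ 2) (hsum : ∑ i, d i = n + (m + 1)) :
    ∃ σ : Equiv.Perm (Fin n), ∀ i, d i = if ((σ i : Fin n) : ℕ) < m + 1 then 2 else 1 := by
  have hd : ∀ i, d i = 1 + if d i = 2 then 1 else 0 := fun i => by
    have := hd₁ i; have := hd₂ i; split_ifs <;> omega
  have htwos : #{i | d i = 2} = m + 1 := by
    rw [sum_congr rfl fun i _ => hd i, sum_add_distrib, sum_boole] at hsum
    simp only [sum_const, card_univ, Fintype.card_fin, smul_eq_mul, mul_one, Nat.cast_id] at hsum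
    omega
  have hle : m + 1 ≤ n := htwos ▸ card_le_univ _ |>.trans_eq (Fintype.card_fin n)
  obtain ⟨σ, hσ⟩ := Equiv.Perm.exists_map_finset_eq {i | d i = 2} {i : Fin n | i < m + 1}
    (by rw [htwos, Fin.card_filter_val_lt, min_eq_right hle])
  refine ⟨σ, fun i => ?_⟩
  have hi : (σ i : ℕ) < m + 1 ↔ d i = 2 := by
    have hmem := mem_map' σ.toEmbedding (s := {i | d i = 2}) (a := i)
    rw [hσ] at hmem
    simpa using hmem
  have := hd₁ i; have := hd₂ i
  split_ifs with h <;> simp only [hi] at h <;> omega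

lemma mul_sub_one_sub_one_add_add_one {k m : ℕ} (hk : 2 ≤ k) (hm : 1 ≤ m) :
    m * (k - 1) - 1 + (m + 1) = k * m := by
  obtain ⟨j, rfl⟩ : ∃ j, k = j + 1 := ⟨k - 1, by omega⟩
  have : 1 ≤ m * j := Nat.mul_pos hm (by omega)
  rw [Nat.add_sub_cancel]
  zify [this]
  ring

/-- Lemma 3.3 / Theorem 3.4, `H*` side: among bicyclic `k`-uniform hypergraph degree
sequences (`n = m(k-1) - 1` positive integers `dᵢ` with `Σ dᵢ = km`, Laplacian degrees
`δᵢ = dᵢ(k-1)`), `Σ δᵢ log₂ δᵢ` is at least `(m+1)(2k-2)log₂(2k-2) +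
(n-m-1)(k-1)log₂(k-1)`; equivalently the entropy `I_δ` is at most the corresponding
bound, with equality iff `(d₁, …, dₙ)` is a permutation of the tuple with `m + 1`
entries `2` and `n - m - 1` entries `1`. -/
theorem stmt_11 (k m n : ℕ) (hk : 3 ≤ k) (hm : 3 ≤ m) (hn : n = m * (k - 1) - 1)
    (d : Fin n → ℕ) (hd : ∀ i, 1 ≤ d i) (hsum : ∑ i, d i = k * m)
    (δ : Fin n → ℝ) (hδ : ∀ i, δ i = (d i : ℝ) * ((k : ℝ) - 1))
    (Iδ : ℝ)
    (hI : Iδ = Real.logb 2 ((k : ℝ) * ((k : ℝ) - 1) * (m : ℝ)) -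
      (1 / ((k : ℝ) * ((k : ℝ) - 1) * (m : ℝ))) * ∑ i, δ i * Real.logb 2 (δ i))
    (B : ℝ)
    (hB : B = Real.logb 2 ((k : ℝ) * ((k : ℝ) - 1) * (m : ℝ)) -
      (1 / ((k : ℝ) * ((k : ℝ) - 1) * (m : ℝ))) *
        (((m : ℝ) + 1) * (2 * (k : ℝ) - 2) * Real.logb 2 (2 * (k : ℝ) - 2) +
          ((n : ℝ) - (m : ℝ) - 1) * ((k : ℝ) - 1) * Real.logb 2 ((k : ℝ) - 1))) :
    (((m : ℝ) + 1) * (2 * (k : ℝ) - 2) * Real.logb 2 (2 * (k : ℝ) - 2) +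
        ((n : ℝ) - (m : ℝ) - 1) * ((k : ℝ) - 1) * Real.logb 2 ((k : ℝ) - 1) ≤
      ∑ i, δ i * Real.logb 2 (δ i)) ∧
    Iδ ≤ B ∧
    (Iδ = B ↔ ∃ σ : Equiv.Perm (Fin n), ∀ i, d i = if ((σ i : Fin n) : ℕ) < m + 1 then 2 else 1) := by
  set L := ∑ i, δ i * logb 2 (δ i)
  set L₀ := ((m : ℝ) + 1) * (2 * (k : ℝ) - 2) * logb 2 (2 * (k : ℝ) - 2) +
    ((n : ℝ) - (m : ℝ) - 1) * ((k : ℝ) - 1) * logb 2 ((k : ℝ) - 1)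
  have hk₁ : (0 : ℝ) < k - 1 := by
    rw [sub_pos, Nat.one_lt_cast]
    omega
  have hsum' : ∑ i, d i = n + (m + 1) := by
    rw [hsum, hn, mul_sub_one_sub_one_add_add_one (by omega) (by omega)]
  have hdsum : ∑ i, (d i : ℝ) = n + (m + 1) := by exact_mod_cast hsum'
  have hexcess : ∑ i, ((d i : ℝ) - 1) = m + 1 := by
    rw [sum_sub_distrib, hdsum, sum_const, card_univ, Fintype.card_fin, nsmul_one]
    ring
  have hgap : L - L₀ =
      (k - 1) * (∑ i, (d i : ℝ) * logb 2 (d i) - 2 * ∑ i, ((d i : ℝ) - 1)) := by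
    simp only [L, L₀, hδ]
    rw [sum_mul_logb_mul_right _ (fun i _ => (Nat.cast_pos.2 (hd i)).ne') hk₁.ne', hdsum,
      hexcess, show 2 * (k : ℝ) - 2 = 2 * (k - 1) by ring, logb_mul two_ne_zero hk₁.ne',
      logb_self_eq_one one_lt_two]
    ring
  have hL₀L : L₀ ≤ L := by
    have := mul_nonneg hk₁.le (sub_nonneg.2 (two_mul_sum_sub_one_le_sum_mul_logb_two hd))
    linarith
  have hP : 0 < 1 / ((k : ℝ) * (k - 1) * m) :=
    one_div_pos.2 (mul_pos (mul_pos (Nat.cast_pos.2 (by omega)) hk₁) (Nat.cast_pos.2 (by omega)))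
  refine ⟨hL₀L, by rw [hI, hB]; gcongr, ?_⟩
  rw [hI, hB, sub_right_inj, mul_right_inj' hP.ne', ← sub_eq_zero, hgap, mul_eq_zero,
    or_iff_right hk₁.ne', sub_eq_zero, sum_mul_logb_two_eq_two_mul_sum_sub_one_iff hd]
  exact ⟨fun h => exists_perm_eq_ite_of_le_two hd h hsum',
    fun ⟨σ, hσ⟩ i => by rw [hσ i]; split_ifs <;> omega⟩
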